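/- Let p be a prime, m ≥ 1, and let F be the m-dimensional linear fractional transformation (LFT) with parameter (i, σ, p⃗, q⃗). Then F maps D_m bijectively onto D_m, and its inverse is given by: if (x_1,…,x_m) = F^{-1}(y_1,…,y_m), then x_i = p_s/(y_s + q_s) and, for k ≠ i, x_k = p_s(y_t + q_t)/(p_t(y_s + q_s)), where s = σ^{-1}(i) and t = σ^{-1}(k). -/

import Mathlib

open MeasureTheory Filter Topology
open scoped Classical

noncomputable section

namespace PadicCF

variable (p : ℕ) [Fact p.Prime]

/-- `pℤ_p`, the maximal ideal of the `p`-adic integers, viewed inside `ℚ_p`. -/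
def pZ : Set ℚ_[p] := {x | ‖x‖ ≤ (p : ℝ)⁻¹}

/-- `D_m`: tuples `(x_1, …, x_m)` such that `1, x_1, …, x_m` are linearly
independent over `ℤ`. -/
def Dm (m : ℕ) : Set (Fin m → ℚ_[p]) :=
  {x | ∀ (c : ℤ) (a : Fin m → ℤ), (c : ℚ_[p]) + ∑ j, (a j : ℚ_[p]) * x j = 0 →
    c = 0 ∧ ∀ j, a j = 0}

/-- `D_m' = D_m ∩ (pℤ_p)^m`. -/
def Dm' (m : ℕ) : Set (Fin m → ℚ_[p]) := {x | x ∈ Dm p m ∧ ∀ j, x j ∈ pZ p}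

variable {m : ℕ}

/-- The `m`-dimensional linear fractional transformation with parameter `(i, σ, pv, qv)`. -/
def LFT (i : Fin m) (σ : Equiv.Perm (Fin m)) (pv qv : Fin m → ℚ)
    (x : Fin m → ℚ_[p]) : Fin m → ℚ_[p] := fun k =>
  if k = σ⁻¹ i then (pv k : ℚ_[p]) / x i - (qv k : ℚ_[p])
  else (pv k : ℚ_[p]) * x (σ k) / x i - (qv k : ℚ_[p])

/-- The inverse of the LFT with parameter `(i, σ, pv, qv)`, given by the explicit formulas
`x_i = p_s/(y_s + q_s)` and `x_k = p_s (y_t + q_t) / (p_t (y_s + q_s))` for `k ≠ i`,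
where `s = σ⁻¹ i`, `t = σ⁻¹ k`. -/
def LFTinv (i : Fin m) (σ : Equiv.Perm (Fin m)) (pv qv : Fin m → ℚ)
    (y : Fin m → ℚ_[p]) : Fin m → ℚ_[p] := fun k =>
  if k = i then (pv (σ⁻¹ i) : ℚ_[p]) / (y (σ⁻¹ i) + (qv (σ⁻¹ i) : ℚ_[p]))
  else (pv (σ⁻¹ i) : ℚ_[p]) * (y (σ⁻¹ k) + (qv (σ⁻¹ k) : ℚ_[p])) /
        ((pv (σ⁻¹ k) : ℚ_[p]) * (y (σ⁻¹ i) + (qv (σ⁻¹ i) : ℚ_[p])))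

/-- Hyperbolicity of an LFT, Definition 2.6 of the paper.  Here `ord` is `padicValRat p`;
the case `q_k = 0` (where `ord q_k = ∞` by convention) is listed explicitly in (iv). -/
def Hyperbolic (i : Fin m) (σ : Equiv.Perm (Fin m)) (pv qv : Fin m → ℚ) : Prop :=
  (∀ k, pv k ≠ 0 ∧ 0 ≤ padicValRat p (pv k)) ∧
  (qv (σ⁻¹ i) ≠ 0 ∧ padicValRat p (qv (σ⁻¹ i)) ≤ 0 ∧
    0 < padicValRat p (pv (σ⁻¹ i) / qv (σ⁻¹ i))) ∧
  (∀ k, k ≠ σ⁻¹ i → qv k ≠ 0 → padicValRat p (qv k) ≤ 0 →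
    padicValRat p (pv k / qv k) < padicValRat p (pv (σ⁻¹ i) / qv (σ⁻¹ i))) ∧
  (∀ k, k ≠ σ⁻¹ i → (qv k = 0 ∨ 0 < padicValRat p (qv k)) →
    padicValRat p (pv k) < padicValRat p (pv (σ⁻¹ i) / qv (σ⁻¹ i)))

/-- `F⁻¹(D_m')`, i.e. the image of `D_m'` under the (formula-defined) inverse of the LFT. -/
def invImg (i : Fin m) (σ : Equiv.Perm (Fin m)) (pv qv : Fin m → ℚ) :
    Set (Fin m → ℚ_[p]) := LFTinv p i σ pv qv '' Dm' p m

/-- A family of hyperbolic LFTs indexed by `Λ` is an `m`-dimensional continued fraction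
system if the sets `F_λ⁻¹(D_m')` form a partition of `D_m'`. -/
def IsCFSystem (m : ℕ) {Λ : Type*} (iF : Λ → Fin m) (σF : Λ → Equiv.Perm (Fin m))
    (pF qF : Λ → Fin m → ℚ) : Prop :=
  (∀ l, Hyperbolic p (iF l) (σF l) (pF l) (qF l)) ∧
  (⋃ l, invImg p (iF l) (σF l) (pF l) (qF l)) = Dm' p m ∧
  (Pairwise fun l l' => Disjoint (invImg p (iF l) (σF l) (pF l) (qF l))
      (invImg p (iF l') (σF l') (pF l') (qF l')))

/-- The sup-norm `|z|_p = max_j |z_j|_p` on `ℚ_p^m`. -/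
def supNorm (z : Fin m → ℚ_[p]) : NNReal := Finset.univ.sup fun j => ‖z j‖₊

/-- `v ∈ ℚ` is the integral part of `α ∈ ℚ_p` if it is of the form
`∑_{n=0}^{N} d_n p^{-n}` with digits `d_n ∈ {0, …, p-1}` and `α - v ∈ pℤ_p`. -/
def IsIntegralPart (α : ℚ_[p]) (v : ℚ) : Prop :=
  (∃ N : ℕ, ∃ d : ℕ → ℕ, (∀ n, d n < p) ∧
      v = ∑ n ∈ Finset.range (N + 1), (d n : ℚ) / (p : ℚ) ^ n) ∧
  ‖α - (v : ℚ_[p])‖ ≤ (p : ℝ)⁻¹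

/-- The integral part `⌊α⌋_p ∈ ℚ` of a `p`-adic number. -/
def padicFloor (α : ℚ_[p]) : ℚ :=
  if h : ∃ v : ℚ, IsIntegralPart p α v then h.choose else 0

/-- `J_N`: rationals `∑_{n=0}^{N} c_n p^{-n}` with digits `c_n ∈ {0,…,p-1}` and `c_N ≠ 0`. -/
def Jset (N : ℕ) : Set ℚ :=
  {v | ∃ c : ℕ → ℕ, (∀ n, c n < p) ∧ c N ≠ 0 ∧
      v = ∑ n ∈ Finset.range (N + 1), (c n : ℚ) / (p : ℚ) ^ n}

/-- The exponent `k = max(ord_p x - ℓ, 0)`, with `k = 0` when `ℓ = ∞`. -/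
def kexp (ℓ : ℕ∞) (x : ℚ_[p]) : ℤ :=
  if ℓ = ⊤ then 0 else max (x.valuation - ((ℓ.untopD 0 : ℕ) : ℤ)) 0

/-- The transformation `T_ℓ : pℤ_p → pℤ_p`, `T_ℓ(x) = p^k/x - ⌊p^k/x⌋_p` with
`k = max(ord_p x - ℓ, 0)`, `T_ℓ(0) = 0`. -/
def Tell (ℓ : ℕ∞) (x : ℚ_[p]) : ℚ_[p] :=
  if x = 0 then 0
  else (p : ℚ_[p]) ^ kexp p ℓ x / x - (padicFloor p ((p : ℚ_[p]) ^ kexp p ℓ x / x) : ℚ_[p])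

/-- The one-dimensional set `D_1' ⊆ pℤ_p` (elements of `pℤ_p` irrational over `ℤ`). -/
def D1 : Set ℚ_[p] :=
  {x | (∀ c a : ℤ, (c : ℚ_[p]) + (a : ℚ_[p]) * x = 0 → c = 0 ∧ a = 0) ∧ x ∈ pZ p}

/-- Index set of the continued fraction system of `T_ℓ`:
pairs `(k, v)` with `k > 0, v ∈ J_ℓ`, or `k = 0` and `v ∈ J_1 ∪ ⋯ ∪ J_ℓ`. -/
def SysIndex (ℓ : ℕ∞) : Set (ℕ × ℚ) :=
  {kv | (0 < kv.1 ∧ ∃ n : ℕ, (n : ℕ∞) = ℓ ∧ kv.2 ∈ Jset p n) ∨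
        (kv.1 = 0 ∧ ∃ n : ℕ, 1 ≤ n ∧ (n : ℕ∞) ≤ ℓ ∧ kv.2 ∈ Jset p n)}

/-- The exponent `r = max(-ℓ - ord_p(x_{k+1}) + ord_p(x_1), 0)` (`0` if `ℓ = ∞`). -/
def rexp (ℓ : ℕ∞) (x1 xk : ℚ_[p]) : ℤ :=
  if ℓ = ⊤ then 0 else max (-((ℓ.untopD 0 : ℕ) : ℤ) - xk.valuation + x1.valuation) 0

/-- The multidimensional transformation `T_{ℓ,m}` on `D_m'`. -/
def Tellm (ℓ : ℕ∞) (x : Fin m → ℚ_[p]) : Fin m → ℚ_[p] := fun k =>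
  if h : (k : ℕ) + 1 = m then Tell p ℓ (x ⟨0, k.pos⟩)
  else
    (p : ℚ_[p]) ^ rexp p ℓ (x ⟨0, k.pos⟩)
        (x ⟨(k : ℕ) + 1, lt_of_le_of_ne (Nat.succ_le_of_lt k.isLt) h⟩) *
        x ⟨(k : ℕ) + 1, lt_of_le_of_ne (Nat.succ_le_of_lt k.isLt) h⟩ / x ⟨0, k.pos⟩ -
      (padicFloor p
        ((p : ℚ_[p]) ^ rexp p ℓ (x ⟨0, k.pos⟩)
            (x ⟨(k : ℕ) + 1, lt_of_le_of_ne (Nat.succ_le_of_lt k.isLt) h⟩) *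
          x ⟨(k : ℕ) + 1, lt_of_le_of_ne (Nat.succ_le_of_lt k.isLt) h⟩ / x ⟨0, k.pos⟩) : ℚ_[p])

/-- The vector of powers `p⃗^{(ℓ,x)}` of Definition 3.13. -/
def pParam (ℓ : ℕ∞) (x : Fin m → ℚ_[p]) (k : Fin m) : ℚ :=
  if ℓ = ⊤ then 1
  else if h : (k : ℕ) + 1 = m then
    (p : ℚ) ^ max (-((ℓ.untopD 0 : ℕ) : ℤ) + (x ⟨0, k.pos⟩).valuation) 0
  else
    (p : ℚ) ^ max (-((ℓ.untopD 0 : ℕ) : ℤ) -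
      (x ⟨(k : ℕ) + 1, lt_of_le_of_ne (Nat.succ_le_of_lt k.isLt) h⟩).valuation +
      (x ⟨0, k.pos⟩).valuation) 0

/-- The vector `q⃗^{(ℓ,x)}` of Definition 3.13. -/
def qParam (ℓ : ℕ∞) (x : Fin m → ℚ_[p]) (k : Fin m) : ℚ :=
  if h : (k : ℕ) + 1 = m then padicFloor p ((pParam p ℓ x k : ℚ_[p]) / x ⟨0, k.pos⟩)
  else padicFloor p ((pParam p ℓ x k : ℚ_[p]) *
    x ⟨(k : ℕ) + 1, lt_of_le_of_ne (Nat.succ_le_of_lt k.isLt) h⟩ / x ⟨0, k.pos⟩)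

/-- The `j`-th convergent `π(α; j) = F⁻¹_{ψ_0} ∘ ⋯ ∘ F⁻¹_{ψ_j} (0̄)`. -/
def convergent (Finv : ℕ → (Fin m → ℚ_[p]) → Fin m → ℚ_[p]) (j : ℕ) : Fin m → ℚ_[p] :=
  (List.range (j + 1)).foldr (fun t acc => Finv t acc) 0

/-- The exponent `h = max_k (ord_p(p_s) - ord_p(p_k))` of Section 5. -/
def hVal (i : Fin m) (σ : Equiv.Perm (Fin m)) (pv : Fin m → ℚ) : ℤ :=
  Finset.univ.sup' ⟨i, Finset.mem_univ i⟩
    fun k => padicValRat p (pv (σ⁻¹ i)) - padicValRat p (pv k)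

/-- The cylinders `V_k^{(y)}` of Section 5. -/
def Vset (i : Fin m) (σ : Equiv.Perm (Fin m)) (pv qv : Fin m → ℚ) (n : ℕ)
    (a : Fin m → ℚ_[p]) (y : ℕ) (k : Fin m) : Set ℚ_[p] :=
  if k = i then
    {t | ∃ w : ℚ_[p], ‖w‖ ≤ (p : ℝ) ^ (-(hVal p i σ pv)) ∧
      t = (pv (σ⁻¹ i) : ℚ_[p]) / (a (σ⁻¹ i) + (qv (σ⁻¹ i) : ℚ_[p])) +
        (p : ℚ_[p]) ^ ((n : ℤ) + padicValRat p (pv (σ⁻¹ i)) -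
          2 * padicValRat p (qv (σ⁻¹ i))) * ((y : ℚ_[p]) + w)}
  else
    {t | ∃ w : ℚ_[p], ‖w‖ ≤ (p : ℝ) ^ (-(n : ℤ)) ∧
      t = ((pv (σ⁻¹ i) : ℚ_[p]) / (a (σ⁻¹ i) + (qv (σ⁻¹ i) : ℚ_[p])) +
        (p : ℚ_[p]) ^ ((n : ℤ) + padicValRat p (pv (σ⁻¹ i)) -
          2 * padicValRat p (qv (σ⁻¹ i))) * (y : ℚ_[p])) *
        (a (σ⁻¹ k) + (qv (σ⁻¹ k) : ℚ_[p])) / (pv (σ⁻¹ k) : ℚ_[p])}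

end PadicCF

/-!
Clearing denominators, `x ∈ D_m` says that `1, x_1, …, x_m` are linearly independent over `ℚ`,
which is preserved by translations by rational vectors. Up to the translation by `q⃗`, the LFT is
`x ↦ (p_k x̂_{σ(k)} / x_i)_k`, where `x̂` is `x` with its `i`-th coordinate replaced by `1`; so
multiplying a rational relation among `1, F(x)_1, …, F(x)_m` by `x_i` and reindexing along `σ`
gives a rational relation among `x_i, x̂_1, …, x̂_m`, that is among `1, x_1, …, x_m`. The explicit
inverse is again of this shape: translation by `q⃗` followed by the LFT with parameter
`(σ⁻¹ i, σ⁻¹, invCoeff i σ p⃗, 0)`. Hence both maps preserve `D_m`, and the two inversion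
identities are field computations, valid because `x_i ≠ 0` and `y_s + q_s ≠ 0` on `D_m`.
-/

theorem linearIndependent_fin_cons_iff_forall {R M : Type*} [Ring R] [AddCommGroup M]
    [Module R M] {m : ℕ} (v₀ : M) (v : Fin m → M) :
    LinearIndependent R (Fin.cons v₀ v : Fin (m + 1) → M) ↔ ∀ (c : R) (a : Fin m → R),
      c • v₀ + ∑ j, a j • v j = 0 → c = 0 ∧ ∀ j, a j = 0 := by
  simp [Fintype.linearIndependent_iff, Fin.sum_univ_succ, Fin.forall_fin_succ,
    Fin.forall_fin_succ_pi]

namespace PadicCF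

section

variable {p : ℕ} [Fact p.Prime] {m : ℕ}

theorem mem_Dm_iff_rat {x : Fin m → ℚ_[p]} :
    x ∈ Dm p m ↔ ∀ (c : ℚ) (a : Fin m → ℚ),
      (c : ℚ_[p]) + ∑ j, (a j : ℚ_[p]) * x j = 0 → c = 0 ∧ ∀ j, a j = 0 := by
  have hℤ := linearIndependent_fin_cons_iff_forall (R := ℤ) (1 : ℚ_[p]) x
  have hℚ := linearIndependent_fin_cons_iff_forall (R := ℚ) (1 : ℚ_[p]) x
  simp only [zsmul_eq_mul, Rat.smul_def, mul_one] at hℤ hℚ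
  rw [Dm, Set.mem_ofPred_eq, ← hℤ, LinearIndependent.iff_fractionRing ℤ ℚ, hℚ]

theorem apply_ne_zero_of_mem_Dm {x : Fin m → ℚ_[p]} (hx : x ∈ Dm p m) (j : Fin m) :
    x j ≠ 0 := by
  intro hj
  simpa using (hx 0 (Pi.single j 1) (by simp [Pi.single_apply, hj])).2 j

theorem add_rat_mem_Dm {x : Fin m → ℚ_[p]} (hx : x ∈ Dm p m) (q : Fin m → ℚ) :
    (x + fun j => (q j : ℚ_[p])) ∈ Dm p m := by
  rw [mem_Dm_iff_rat] at hx ⊢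
  intro c a h
  have h' : ((c + ∑ j, a j * q j : ℚ) : ℚ_[p]) + ∑ j, (a j : ℚ_[p]) * x j = 0 := by
    rw [← h]
    push_cast
    simp only [Pi.add_apply, mul_add, Finset.sum_add_distrib]
    ring
  obtain ⟨hc, ha⟩ := hx _ _ h'
  refine ⟨?_, ha⟩
  simpa [ha] using hc

theorem sub_rat_mem_Dm {x : Fin m → ℚ_[p]} (hx : x ∈ Dm p m) (q : Fin m → ℚ) :
    (x - fun j => (q j : ℚ_[p])) ∈ Dm p m := by
  convert add_rat_mem_Dm hx (-q) using 1
  ext j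
  simp [sub_eq_add_neg]

theorem eq_zero_of_mul_add_sum_update_eq_zero {x : Fin m → ℚ_[p]} (hx : x ∈ Dm p m) (i : Fin m)
    (c : ℚ) (w : Fin m → ℚ)
    (h : (c : ℚ_[p]) * x i + ∑ j, (w j : ℚ_[p]) * Function.update x i 1 j = 0) :
    c = 0 ∧ ∀ j, w j = 0 := by
  have h' : (w i : ℚ_[p]) + ∑ j, (Function.update w i c j : ℚ_[p]) * x j = 0 := by
    rw [← h, Fintype.sum_eq_add_sum_compl i, Fintype.sum_eq_add_sum_compl i]
    have hcompl : ∑ j ∈ {i}ᶜ, (Function.update w i c j : ℚ_[p]) * x j =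
        ∑ j ∈ {i}ᶜ, (w j : ℚ_[p]) * Function.update x i 1 j :=
      Finset.sum_congr rfl fun j hj => by
        have hji : j ≠ i := by simpa using hj
        rw [Function.update_of_ne hji, Function.update_of_ne hji]
    simp only [Function.update_self, hcompl]
    ring
  obtain ⟨hwi, hw⟩ := mem_Dm_iff_rat.mp hx _ _ h'
  refine ⟨by simpa using hw i, fun j => ?_⟩
  rcases eq_or_ne j i with rfl | hj
  · exact hwi
  · simpa [hj] using hw j

variable (p) in
theorem LFT_eq_LFT_zero_sub (i : Fin m) (σ : Equiv.Perm (Fin m)) (pv qv : Fin m → ℚ)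
    (x : Fin m → ℚ_[p]) : LFT p i σ pv qv x = LFT p i σ pv 0 x - fun k => (qv k : ℚ_[p]) := by
  ext k
  simp only [LFT, Pi.sub_apply, Pi.zero_apply, Rat.cast_zero, sub_zero]
  split_ifs <;> rfl

theorem mul_LFT_zero_apply {x : Fin m → ℚ_[p]} {i : Fin m} (hxi : x i ≠ 0)
    (σ : Equiv.Perm (Fin m)) (pv : Fin m → ℚ) (k : Fin m) :
    x i * LFT p i σ pv 0 x k = pv k * Function.update x i 1 (σ k) := by
  simp only [LFT, Pi.zero_apply, Rat.cast_zero, sub_zero]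
  split_ifs with hk
  · subst hk
    simp only [Equiv.Perm.coe_inv, Equiv.apply_symm_apply, Function.update_self]
    field_simp
  · rw [Function.update_of_ne (fun h => hk (by simp [← h]))]
    field_simp

theorem LFT_zero_mem_Dm {x : Fin m → ℚ_[p]} (hx : x ∈ Dm p m) (i : Fin m)
    (σ : Equiv.Perm (Fin m)) {pv : Fin m → ℚ} (hpv : ∀ k, pv k ≠ 0) :
    LFT p i σ pv 0 x ∈ Dm p m := by
  rw [mem_Dm_iff_rat]
  intro c a h
  have hrel : (c : ℚ_[p]) * x i +
      ∑ j, ((a (σ⁻¹ j) * pv (σ⁻¹ j) : ℚ) : ℚ_[p]) * Function.update x i 1 j = 0 := by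
    calc _ = x i * ((c : ℚ_[p]) + ∑ k, (a k : ℚ_[p]) * LFT p i σ pv 0 x k) := by
          rw [mul_add, Finset.mul_sum, ← Equiv.sum_comp σ]
          simp only [Equiv.Perm.coe_inv, Equiv.symm_apply_apply, mul_left_comm (x i),
            mul_LFT_zero_apply (apply_ne_zero_of_mem_Dm hx i), Rat.cast_mul, mul_assoc]
          ring
      _ = 0 := by rw [h, mul_zero]
  obtain ⟨hc, hw⟩ := eq_zero_of_mul_add_sum_update_eq_zero hx i c _ hrel
  exact ⟨hc, fun k => by simpa [hpv] using hw (σ k)⟩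

theorem LFTinv_LFT {x : Fin m → ℚ_[p]} (hx : x ∈ Dm p m) (i : Fin m) (σ : Equiv.Perm (Fin m))
    {pv : Fin m → ℚ} (hpv : ∀ k, pv k ≠ 0) (qv : Fin m → ℚ) :
    LFTinv p i σ pv qv (LFT p i σ pv qv x) = x := by
  have hpv' : ∀ k, (pv k : ℚ_[p]) ≠ 0 := fun k => Rat.cast_ne_zero.mpr (hpv k)
  have hxi : x i ≠ 0 := apply_ne_zero_of_mem_Dm hx i
  ext k
  rcases eq_or_ne k i with rfl | hki
  · simp [LFTinv, LFT, hpv']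
  · simp [LFTinv, LFT, hki]
    field_simp [hpv' (σ.symm i), hpv' (σ.symm k)]

theorem LFT_LFTinv {y : Fin m → ℚ_[p]} (hy : y ∈ Dm p m) (i : Fin m) (σ : Equiv.Perm (Fin m))
    {pv : Fin m → ℚ} (hpv : ∀ k, pv k ≠ 0) (qv : Fin m → ℚ) :
    LFT p i σ pv qv (LFTinv p i σ pv qv y) = y := by
  have hpv' : ∀ k, (pv k : ℚ_[p]) ≠ 0 := fun k => Rat.cast_ne_zero.mpr (hpv k)
  have hys : y (σ.symm i) + (qv (σ.symm i) : ℚ_[p]) ≠ 0 :=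
    apply_ne_zero_of_mem_Dm (add_rat_mem_Dm hy qv) (σ⁻¹ i)
  ext k
  rcases eq_or_ne k (σ.symm i) with rfl | hk
  · simp [LFTinv, LFT, hpv']
  · have hσk : σ k ≠ i := by rintro rfl; simp at hk
    simp [LFTinv, LFT, hk, hσk]
    field_simp [hpv' k, hpv' (σ.symm i), hys]
    ring

def invCoeff (i : Fin m) (σ : Equiv.Perm (Fin m)) (pv : Fin m → ℚ) : Fin m → ℚ :=
  fun k => if k = i then pv (σ⁻¹ i) else pv (σ⁻¹ i) / pv (σ⁻¹ k)

theorem invCoeff_ne_zero {pv : Fin m → ℚ} (hpv : ∀ k, pv k ≠ 0) (i : Fin m)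
    (σ : Equiv.Perm (Fin m)) (k : Fin m) : invCoeff i σ pv k ≠ 0 := by
  unfold invCoeff
  split_ifs <;> simp [hpv]

variable (p) in
theorem LFTinv_eq_LFT_zero_add (i : Fin m) (σ : Equiv.Perm (Fin m)) (pv qv : Fin m → ℚ)
    (y : Fin m → ℚ_[p]) :
    LFTinv p i σ pv qv y = LFT p (σ⁻¹ i) σ⁻¹ (invCoeff i σ pv) 0 (y + fun k => (qv k : ℚ_[p])) := by
  ext k
  by_cases hk : k = i
  · simp [LFTinv, LFT, invCoeff, hk]
  · have hk' : k ≠ σ⁻¹⁻¹ (σ⁻¹ i) := by simpa using hk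
    simp only [LFTinv, LFT, invCoeff, if_neg hk, if_neg hk', Pi.add_apply, Rat.cast_div,
      Pi.zero_apply, Rat.cast_zero, sub_zero]
    rw [div_mul_eq_mul_div, div_div]

theorem mapsTo_LFT (i : Fin m) (σ : Equiv.Perm (Fin m)) {pv : Fin m → ℚ}
    (hpv : ∀ k, pv k ≠ 0) (qv : Fin m → ℚ) : Set.MapsTo (LFT p i σ pv qv) (Dm p m) (Dm p m) :=
  fun x hx => by
    rw [LFT_eq_LFT_zero_sub]
    exact sub_rat_mem_Dm (LFT_zero_mem_Dm hx i σ hpv) qv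

theorem mapsTo_LFTinv (i : Fin m) (σ : Equiv.Perm (Fin m)) {pv : Fin m → ℚ}
    (hpv : ∀ k, pv k ≠ 0) (qv : Fin m → ℚ) :
    Set.MapsTo (LFTinv p i σ pv qv) (Dm p m) (Dm p m) :=
  fun y hy => by
    rw [LFTinv_eq_LFT_zero_add]
    exact LFT_zero_mem_Dm (add_rat_mem_Dm hy qv) _ _ (invCoeff_ne_zero hpv i σ)

theorem invOn_LFTinv_LFT (i : Fin m) (σ : Equiv.Perm (Fin m)) {pv : Fin m → ℚ}
    (hpv : ∀ k, pv k ≠ 0) (qv : Fin m → ℚ) :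
    Set.InvOn (LFTinv p i σ pv qv) (LFT p i σ pv qv) (Dm p m) (Dm p m) :=
  ⟨fun _ hx => LFTinv_LFT hx i σ hpv qv, fun _ hy => LFT_LFTinv hy i σ hpv qv⟩

end

variable (p : ℕ) [Fact p.Prime]

theorem lft_bijOn_invOn (m : ℕ) (i : Fin m) (σ : Equiv.Perm (Fin m))
    (pv qv : Fin m → ℚ) (hpv : ∀ k, pv k ≠ 0) :
    Set.BijOn (LFT p i σ pv qv) (Dm p m) (Dm p m) ∧
    Set.InvOn (LFTinv p i σ pv qv) (LFT p i σ pv qv) (Dm p m) (Dm p m) :=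
  ⟨(invOn_LFTinv_LFT i σ hpv qv).bijOn (mapsTo_LFT i σ hpv qv) (mapsTo_LFTinv i σ hpv qv),
    invOn_LFTinv_LFT i σ hpv qv⟩

end PadicCF
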